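/- Let Σ be a finite alphabet, ▷,◁ ∉ Σ two endmarkers, and Σ̌ = Σ ∪ {▷,◁}. For each n ∈ ℕ let Q_n be a finite set with |Q_n| ≤ p′(n) for a fixed polynomial p′, let ν_n ∈ ℝ^{Q_n} be a row vector with nonnegative entries summing to 1, let (M_σ^{(n)})_{σ∈Σ̌} be row-stochastic Q_n × Q_n real matrices, let Q_{acc,n} ⊆ Q_n, and let D_n ⊆ Σ*. For a word w = w₁⋯w_k over Σ̌ write M_w^{(n)} = M_{w₁}^{(n)}⋯M_{w_k}^{(n)}, and for x ∈ Σ* and q ∈ Q_n let p_{acc,n}(x:q) denote the q-entry of the row vector ν_n M_{▷x◁}^{(n)}. Let f be any function assigning a real number f(n,m,l,q) to each (n,m,l) ∈ ℕ³ and q ∈ Q_{acc,n}. Then there exists a polynomial p such that for all n,m,l ∈ ℕ⁺ with l ≤ m−1 and every q ∈ Q_{acc,n}, setting A_{n,m,l,q} = {x ∈ Σ^{m−l} : there exists z ∈ Σ^l with xz ∈ D_n and p_{acc,n}(xz:q) = f(n,m,l,q)}, there is a subset S ⊆ A_{n,m,l,q} with |S| ≤ p(n) such that for every y ∈ Σ^l: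 if wy ∈ D_n and p_{acc,n}(wy:q) = f(n,m,l,q) for all w ∈ S, then p_{acc,n}(xy:q) = f(n,m,l,q) for all x ∈ A_{n,m,l,q} with xy ∈ D_n. -/

import Mathlib

/-! ## One-way nondeterministic finite automata -/

structure OneNFA (α : Type) : Type 1 where
  Q : Type
  [finQ : Fintype Q]
  start : Q
  next : Q → α → Set Q
  next_nonempty : ∀ q a, (next q a).Nonempty
  acc : Set Q

attribute [instance] OneNFA.finQ

namespace OneNFA

variable {α : Type}

/-- The state complexity (number of inner states). -/
def sc (M : OneNFA α) : ℕ := Fintype.card M.Q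

/-- `p` is a computation path of `M` on input `x`. -/
def IsPath (M : OneNFA α) (x : List α) (p : Fin (x.length + 1) → M.Q) : Prop :=
  p 0 = M.start ∧ ∀ i : Fin x.length, p i.succ ∈ M.next (p i.castSucc) (x.get i)

/-- `p` is an accepting computation path of `M` on input `x`. -/
def IsAccPath (M : OneNFA α) (x : List α) (p : Fin (x.length + 1) → M.Q) : Prop :=
  M.IsPath x p ∧ p (Fin.last x.length) ∈ M.acc

def Accepts (M : OneNFA α) (x : List α) : Prop := ∃ p, M.IsAccPath x p

/-- `M` is a 1dfa: every transition set is a singleton. -/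
def Deterministic (M : OneNFA α) : Prop := ∀ q a, ∃ q', M.next q a = {q'}

end OneNFA

/-! ## Families of promise problems -/

structure PromiseFamily (α : Type) where
  pos : ℕ → Set (List α)
  neg : ℕ → Set (List α)
  disj : ∀ n, Disjoint (pos n) (neg n)

namespace PromiseFamily

def valid {α : Type} (L : PromiseFamily α) (n : ℕ) : Set (List α) := L.pos n ∪ L.neg n

def co {α : Type} (L : PromiseFamily α) : PromiseFamily α :=
  ⟨L.neg, L.pos, fun n => (L.disj n).symm⟩

end PromiseFamily

/-- A family of promise problems over some finite alphabet. -/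
structure Family : Type 1 where
  alph : Type
  [finA : Fintype alph]
  prob : PromiseFamily alph

attribute [instance] Family.finA

def Family.co (F : Family) : Family := { alph := F.alph, prob := F.prob.co }

/-! ## One-way machine families -/

def Solves1 {α : Type} (M : ℕ → OneNFA α) (L : PromiseFamily α) : Prop :=
  ∀ n, (∀ x ∈ L.pos n, (M n).Accepts x) ∧ (∀ x ∈ L.neg n, ¬ (M n).Accepts x)

def PolySize1 {α : Type} (M : ℕ → OneNFA α) : Prop :=
  ∃ p : Polynomial ℕ, ∀ n, (M n).sc ≤ p.eval n

def Unambiguous1 {α : Type} (M : ℕ → OneNFA α) (L : PromiseFamily α) : Prop :=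
  ∀ n, ∀ x ∈ L.valid n, {p | (M n).IsAccPath x p}.Subsingleton

def AcceptFew1 {α : Type} (M : ℕ → OneNFA α) (L : PromiseFamily α) : Prop :=
  ∃ P : MvPolynomial (Fin 2) ℕ, ∀ n, ∀ x ∈ L.valid n,
    {p | (M n).IsAccPath x p}.ncard ≤ MvPolynomial.eval ![n, x.length] P

def WeaklyUnambiguous1 {α : Type} (M : ℕ → OneNFA α) (L : PromiseFamily α) : Prop :=
  ∀ n, ∀ x ∈ L.valid n, ∀ q : (M n).Q,
    {p | (M n).IsAccPath x p ∧ p (Fin.last x.length) = q}.Subsingleton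

def ReachUnambiguous1 {α : Type} (M : ℕ → OneNFA α) (L : PromiseFamily α) : Prop :=
  ∀ n, ∀ x ∈ L.valid n, ∀ i ≤ x.length, ∀ q : (M n).Q,
    {p : Fin ((x.take i).length + 1) → (M n).Q |
      (M n).IsPath (x.take i) p ∧ p (Fin.last (x.take i).length) = q}.Subsingleton

def ReachFew1 {α : Type} (M : ℕ → OneNFA α) (L : PromiseFamily α) : Prop :=
  ∃ P : MvPolynomial (Fin 2) ℕ, ∀ n, ∀ x ∈ L.valid n, ∀ i ≤ x.length, ∀ q : (M n).Q,
    {p : Fin ((x.take i).length + 1) → (M n).Q |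
      (M n).IsPath (x.take i) p ∧ p (Fin.last (x.take i).length) = q}.ncard ≤
      MvPolynomial.eval ![n, x.length] P

/-! ## One-way nonuniform state complexity classes -/

def oneN : Set Family :=
  {F | ∃ M : ℕ → OneNFA F.alph, PolySize1 M ∧ Solves1 M F.prob}

def oneD : Set Family :=
  {F | ∃ M : ℕ → OneNFA F.alph, PolySize1 M ∧ (∀ n, (M n).Deterministic) ∧ Solves1 M F.prob}

def oneU : Set Family :=
  {F | ∃ M : ℕ → OneNFA F.alph, PolySize1 M ∧ Unambiguous1 M F.prob ∧ Solves1 M F.prob}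

def oneFew : Set Family :=
  {F | ∃ M : ℕ → OneNFA F.alph, PolySize1 M ∧ AcceptFew1 M F.prob ∧ Solves1 M F.prob}

def oneFewU : Set Family :=
  {F | ∃ M : ℕ → OneNFA F.alph, PolySize1 M ∧ AcceptFew1 M F.prob ∧
        WeaklyUnambiguous1 M F.prob ∧ Solves1 M F.prob}

def oneReachU : Set Family :=
  {F | ∃ M : ℕ → OneNFA F.alph, PolySize1 M ∧ AcceptFew1 M F.prob ∧
        ReachUnambiguous1 M F.prob ∧ Solves1 M F.prob}

def oneReachFew : Set Family :=
  {F | ∃ M : ℕ → OneNFA F.alph, PolySize1 M ∧ AcceptFew1 M F.prob ∧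
        ReachFew1 M F.prob ∧ Solves1 M F.prob}

def oneReachFewU : Set Family :=
  {F | ∃ M : ℕ → OneNFA F.alph, PolySize1 M ∧ AcceptFew1 M F.prob ∧
        ReachFew1 M F.prob ∧ WeaklyUnambiguous1 M F.prob ∧ Solves1 M F.prob}

/-- The complement class `co-C`. -/
def coC (C : Set Family) : Set Family := {F | F.co ∈ C}
/-! ## Two-way nondeterministic finite automata -/

/-- A tape symbol: either an input symbol, the left endmarker `Sum.inr false`,
or the right endmarker `Sum.inr true`. -/
def TapeSym (α : Type) : Type := α ⊕ Bool

/-- The symbol held in cell `i` of the tape containing `▷x◁`. -/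
def tapeAt {α : Type} (x : List α) (i : ℕ) : TapeSym α :=
  if h0 : i = 0 then Sum.inr false
  else if h : i ≤ x.length then Sum.inl (x.get ⟨i - 1, by omega⟩)
  else Sum.inr true

structure TwoNFA (α : Type) : Type 1 where
  Q : Type
  [finQ : Fintype Q]
  start : Q
  acc : Set Q
  rej : Set Q
  acc_rej_disj : Disjoint acc rej
  next : Q → TapeSym α → Set (Q × ℤ)
  next_dir : ∀ q a t, t ∈ next q a → t.2 = -1 ∨ t.2 = 0 ∨ t.2 = 1

attribute [instance] TwoNFA.finQ

namespace TwoNFA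

variable {α : Type}

def sc (M : TwoNFA α) : ℕ := Fintype.card M.Q

def Halting (M : TwoNFA α) (q : M.Q) : Prop := q ∈ M.acc ∨ q ∈ M.rej

/-- Configuration `c` yields configuration `c'` in one step on input `x`. -/
def Yields (M : TwoNFA α) (x : List α) (c c' : M.Q × ℕ) : Prop :=
  ¬ M.Halting c.1 ∧ c.2 ≤ x.length + 1 ∧ c'.2 ≤ x.length + 1 ∧
    ∃ d : ℤ, (c'.1, d) ∈ M.next c.1 (tapeAt x c.2) ∧ (c'.2 : ℤ) = (c.2 : ℤ) + d

/-- A partial computation path of length `k` of `M` on `x`. -/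
def IsPartialPath (M : TwoNFA α) (x : List α) (k : ℕ) (p : Fin (k + 1) → M.Q × ℕ) : Prop :=
  p 0 = (M.start, 0) ∧ ∀ i : Fin k, M.Yields x (p i.castSucc) (p i.succ)

/-- A (full) computation path: the final configuration is the only halting one. -/
def IsCompPath (M : TwoNFA α) (x : List α) (k : ℕ) (p : Fin (k + 1) → M.Q × ℕ) : Prop :=
  M.IsPartialPath x k p ∧ ∀ i : Fin (k + 1), (M.Halting (p i).1 ↔ i = Fin.last k)

def IsAccPath (M : TwoNFA α) (x : List α) (k : ℕ) (p : Fin (k + 1) → M.Q × ℕ) : Prop :=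
  M.IsCompPath x k p ∧ (p (Fin.last k)).1 ∈ M.acc

def Accepts (M : TwoNFA α) (x : List α) : Prop := ∃ k p, M.IsAccPath x k p

def Deterministic (M : TwoNFA α) : Prop := ∀ q a, ∃ t, M.next q a = {t}

/-- The set of accepting computation paths of `M` on `x`. -/
def accPaths (M : TwoNFA α) (x : List α) : Set ((k : ℕ) × (Fin (k + 1) → M.Q × ℕ)) :=
  {kp | M.IsAccPath x kp.1 kp.2}

/-- The set of computation paths of `M` on `x` ending at configuration `conf`. -/
def compPathsTo (M : TwoNFA α) (x : List α) (conf : M.Q × ℕ) :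
    Set ((k : ℕ) × (Fin (k + 1) → M.Q × ℕ)) :=
  {kp | M.IsCompPath x kp.1 kp.2 ∧ kp.2 (Fin.last kp.1) = conf}

/-- The set of partial computation paths of `M` on `x` ending at configuration `conf`. -/
def partialPathsTo (M : TwoNFA α) (x : List α) (conf : M.Q × ℕ) :
    Set ((k : ℕ) × (Fin (k + 1) → M.Q × ℕ)) :=
  {kp | M.IsPartialPath x kp.1 kp.2 ∧ kp.2 (Fin.last kp.1) = conf}

end TwoNFA

/-! ## Two-way machine families -/

def Solves2 {α : Type} (M : ℕ → TwoNFA α) (L : PromiseFamily α) : Prop :=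
  ∀ n, (∀ x ∈ L.pos n, (M n).Accepts x) ∧ (∀ x ∈ L.neg n, ¬ (M n).Accepts x)

def PolySize2 {α : Type} (M : ℕ → TwoNFA α) : Prop :=
  ∃ p : Polynomial ℕ, ∀ n, (M n).sc ≤ p.eval n

def Unambiguous2 {α : Type} (M : ℕ → TwoNFA α) (L : PromiseFamily α) : Prop :=
  ∀ n, ∀ x ∈ L.valid n, ((M n).accPaths x).Subsingleton

def AcceptFew2 {α : Type} (M : ℕ → TwoNFA α) (L : PromiseFamily α) : Prop :=
  ∃ P : MvPolynomial (Fin 2) ℕ, ∀ n, ∀ x ∈ L.valid n,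
    ((M n).accPaths x).encard ≤ (MvPolynomial.eval ![n, x.length] P : ℕ∞)

def WeaklyUnambiguous2 {α : Type} (M : ℕ → TwoNFA α) (L : PromiseFamily α) : Prop :=
  ∀ n, ∀ x ∈ L.valid n, ∀ conf : (M n).Q × ℕ, conf.1 ∈ (M n).acc →
    ((M n).compPathsTo x conf).Subsingleton

def ReachUnambiguous2 {α : Type} (M : ℕ → TwoNFA α) (L : PromiseFamily α) : Prop :=
  ∀ n, ∀ x ∈ L.valid n, ∀ conf : (M n).Q × ℕ,
    ((M n).partialPathsTo x conf).Subsingleton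

def ReachFew2 {α : Type} (M : ℕ → TwoNFA α) (L : PromiseFamily α) : Prop :=
  ∃ P : MvPolynomial (Fin 2) ℕ, ∀ n, ∀ x ∈ L.valid n, ∀ conf : (M n).Q × ℕ,
    ((M n).partialPathsTo x conf).encard ≤ (MvPolynomial.eval ![n, x.length] P : ℕ∞)

/-! ## Two-way nonuniform state complexity classes -/

def twoN : Set Family :=
  {F | ∃ M : ℕ → TwoNFA F.alph, PolySize2 M ∧ Solves2 M F.prob}

def twoD : Set Family :=
  {F | ∃ M : ℕ → TwoNFA F.alph, PolySize2 M ∧ (∀ n, (M n).Deterministic) ∧ Solves2 M F.prob}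

def twoU : Set Family :=
  {F | ∃ M : ℕ → TwoNFA F.alph, PolySize2 M ∧ Unambiguous2 M F.prob ∧ Solves2 M F.prob}

def twoFew : Set Family :=
  {F | ∃ M : ℕ → TwoNFA F.alph, PolySize2 M ∧ AcceptFew2 M F.prob ∧ Solves2 M F.prob}

def twoFewU : Set Family :=
  {F | ∃ M : ℕ → TwoNFA F.alph, PolySize2 M ∧ AcceptFew2 M F.prob ∧
        WeaklyUnambiguous2 M F.prob ∧ Solves2 M F.prob}

def twoReachU : Set Family :=
  {F | ∃ M : ℕ → TwoNFA F.alph, PolySize2 M ∧ AcceptFew2 M F.prob ∧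
        ReachUnambiguous2 M F.prob ∧ Solves2 M F.prob}

def twoReachFew : Set Family :=
  {F | ∃ M : ℕ → TwoNFA F.alph, PolySize2 M ∧ AcceptFew2 M F.prob ∧
        ReachFew2 M F.prob ∧ Solves2 M F.prob}

def twoReachFewU : Set Family :=
  {F | ∃ M : ℕ → TwoNFA F.alph, PolySize2 M ∧ AcceptFew2 M F.prob ∧
        ReachFew2 M F.prob ∧ WeaklyUnambiguous2 M F.prob ∧ Solves2 M F.prob}

/-! ## Ceilings -/

/-- The family `F` has an `f(n)`-ceiling. -/
def HasCeiling (F : Family) (f : ℕ → ℕ) : Prop :=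
  ∀ n, ∀ x ∈ F.prob.valid n, x.length ≤ f n

/-- The restriction `C/F` of a class `C` to families having an `f`-ceiling for some `f ∈ S`. -/
def ceil (C : Set Family) (S : Set (ℕ → ℕ)) : Set Family :=
  {F | F ∈ C ∧ ∃ f ∈ S, HasCeiling F f}

def polyFuns : Set (ℕ → ℕ) := {f | ∃ p : Polynomial ℕ, ∀ n, f n = p.eval n}

/-- Super-exponential functions: `f(n) > 2^{p(n)}` for all but finitely many `n`,
for every polynomial `p`. -/
def supexpFuns : Set (ℕ → ℕ) :=
  {f | ∀ p : Polynomial ℕ, ∃ N, ∀ n ≥ N, 2 ^ p.eval n < f n}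

/-- `F` has a logarithmic ceiling `ℓ(n) = a·log₂ n + b` with constants `a, b ≥ 0`. -/
def HasLogCeiling (F : Family) : Prop :=
  ∃ a b : ℝ, 0 ≤ a ∧ 0 ≤ b ∧
    ∀ n, ∀ x ∈ F.prob.valid n, (x.length : ℝ) ≤ a * Real.logb 2 n + b

/-- The restriction `C/log` of a class `C` to families having logarithmic ceilings. -/
def ceilLog (C : Set Family) : Set Family := {F | F ∈ C ∧ HasLogCeiling F}
/-! ## The alphabet `{0, 1, #}` and encodings -/

inductive Sym3 : Type
  | zero | one | hash
deriving DecidableEq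

instance : Fintype Sym3 :=
  ⟨{Sym3.zero, Sym3.one, Sym3.hash}, by intro x; cases x <;> simp⟩

/-- The block `1^i 0^{m-i}`. -/
def block (m i : ℕ) : List Sym3 :=
  List.replicate i Sym3.one ++ List.replicate (m - i) Sym3.zero

lemma block_length {m i : ℕ} (h : i ≤ m) : (block m i).length = m := by
  simp [block]; omega

lemma block_count {m : ℕ} (i : ℕ) : (block m i).count Sym3.one = i := by
  simp [block, List.count_append, List.count_replicate]

lemma block_inj {m i j : ℕ} (h : block m i = block m j) : i = j := by
  have := block_count (m := m) i
  rw [h, block_count] at this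
  omega

/-- The encoding `[[i₁,…,i_k]]_m` of a list of numbers. -/
def enc (m : ℕ) : List ℕ → List Sym3
  | [] => []
  | [i] => block m i
  | i :: j :: rest => block m i ++ Sym3.zero :: enc m (j :: rest)

/-- Lists of length `k` with entries in `[n]`. -/
def ValidList (n k : ℕ) (l : List ℕ) : Prop :=
  l.length = k ∧ ∀ i ∈ l, 1 ≤ i ∧ i ≤ n

lemma enc_length {m : ℕ} :
    ∀ l : List ℕ, (∀ i ∈ l, i ≤ m) → (enc m l).length = l.length * (m + 1) - 1
  | [] => by simp [enc]
  | [i] => by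
      intro h
      simp [enc, block_length (h i (by simp))]
  | i :: j :: rest => by
      intro h
      have ih := enc_length (j :: rest) (fun a ha => h a (List.mem_cons_of_mem _ ha))
      have hb : (block m i).length = m := block_length (h i (List.mem_cons_self))
      show (block m i ++ Sym3.zero :: enc m (j :: rest)).length = _
      rw [List.length_append, hb, List.length_cons, ih]
      have hc : (i :: j :: rest).length = (j :: rest).length + 1 := by simp
      rw [hc]
      set L := (j :: rest).length with hLdef
      have hL : 1 ≤ L := by simp [hLdef]
      have h1 : (L + 1) * (m + 1) = L * (m + 1) + (m + 1) := by ring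
      rw [h1]
      set P := L * (m + 1) with hPdef
      have hP : 1 ≤ P := by
        have := Nat.mul_le_mul hL (Nat.le_add_left 1 m)
        simpa [hPdef] using this
      omega

lemma enc_ne_nil {m : ℕ} (i : ℕ) (rest : List ℕ) (hi : 1 ≤ i) :
    enc m (i :: rest) ≠ [] := by
  cases rest with
  | nil =>
      simp only [enc, block]
      intro h
      have := congrArg List.length h
      simp at this
      omega
  | cons j rest' =>
      simp only [enc]
      intro h
      have := congrArg List.length h
      simp at this

lemma enc_inj {m : ℕ} :
    ∀ u w : List ℕ, (∀ i ∈ u, 1 ≤ i ∧ i ≤ m) → (∀ i ∈ w, 1 ≤ i ∧ i ≤ m) →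
      enc m u = enc m w → u = w
  | [], [], _, _, _ => rfl
  | [], j :: w', _, hw, h => by
      exact absurd h.symm (enc_ne_nil j w' (hw j (by simp)).1)
  | i :: u', [], hu, _, h => by
      exact absurd h (enc_ne_nil i u' (hu i (by simp)).1)
  | [i], [j], hu, hw, h => by
      simp only [enc] at h
      rw [block_inj h]
  | [i], j :: b :: w', hu, hw, h => by
      exfalso
      have hl := congrArg List.length h
      rw [show enc m [i] = block m i from rfl,
        show enc m (j :: b :: w') = block m j ++ Sym3.zero :: enc m (b :: w') from rfl] at hl
      rw [List.length_append, List.length_cons,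
        block_length (hu i (by simp)).2, block_length (hw j (by simp)).2] at hl
      omega
  | i :: a :: u', [j], hu, hw, h => by
      exfalso
      have hl := congrArg List.length h
      rw [show enc m [j] = block m j from rfl,
        show enc m (i :: a :: u') = block m i ++ Sym3.zero :: enc m (a :: u') from rfl] at hl
      rw [List.length_append, List.length_cons,
        block_length (hu i (by simp)).2, block_length (hw j (by simp)).2] at hl
      omega
  | i :: a :: u', j :: b :: w', hu, hw, h => by
      rw [show enc m (i :: a :: u') = block m i ++ Sym3.zero :: enc m (a :: u') from rfl,
        show enc m (j :: b :: w') = block m j ++ Sym3.zero :: enc m (b :: w') from rfl] at h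
      have hlen : (block m i).length = (block m j).length := by
        rw [block_length (hu i (by simp)).2, block_length (hw j (by simp)).2]
      obtain ⟨h1, h2⟩ := List.append_inj h hlen
      have h3 : enc m (a :: u') = enc m (b :: w') := by
        simpa using h2
      have ih := enc_inj (a :: u') (b :: w')
        (fun x hx => hu x (List.mem_cons_of_mem _ hx))
        (fun x hx => hw x (List.mem_cons_of_mem _ hx)) h3
      rw [block_inj h1, ih]
/-! ## The promise problem family `L₁` -/

def L1pos (n : ℕ) : Set (List Sym3) :=
  {x | ∃ u v : List ℕ, ValidList n n u ∧ ValidList n n v ∧ u ≠ v ∧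
        x = enc n u ++ Sym3.hash :: enc n v}

def L1neg (n : ℕ) : Set (List Sym3) :=
  {x | ∃ u v : List ℕ, ValidList n n u ∧ ValidList n n v ∧ u = v ∧
        x = enc n u ++ Sym3.hash :: enc n v}

lemma L1_disj (n : ℕ) : Disjoint (L1pos n) (L1neg n) := by
  rw [Set.disjoint_left]
  rintro x ⟨u, v, hu, hv, huv, rfl⟩ ⟨u', v', hu', hv', huv', heq⟩
  have hlen : (enc n u).length = (enc n u').length := by
    rw [enc_length u (fun i hi => (hu.2 i hi).2),
      enc_length u' (fun i hi => (hu'.2 i hi).2), hu.1, hu'.1]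
  obtain ⟨h1, h2⟩ := List.append_inj heq hlen
  have h2' : enc n v = enc n v' := by simpa using h2
  have e1 : u = u' := enc_inj u u' hu.2 hu'.2 h1
  have e2 : v = v' := enc_inj v v' hv.2 hv'.2 h2'
  exact huv (by rw [e1, e2, huv'])

def L1prob : PromiseFamily Sym3 := ⟨L1pos, L1neg, L1_disj⟩

def L1fam : Family := { alph := Sym3, prob := L1prob }

/-! ## Matrices, their encodings, and the promise problem family `L₂` -/

/-- `R` represents an `n × n` matrix with entries in `[n]`, given as its list of rows. -/
def ValidMat (n : ℕ) (R : List (List ℕ)) : Prop :=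
  R.length = n ∧ ∀ r ∈ R, ValidList n n r

/-- The encoding `[[D]]_n` of a matrix: its encoded rows joined by `#`. -/
def encMat (n : ℕ) : List (List ℕ) → List Sym3
  | [] => []
  | [r] => enc n r
  | r :: s :: rest => enc n r ++ Sym3.hash :: encMat n (s :: rest)

lemma encMat_len {n : ℕ} :
    ∀ R : List (List ℕ), (∀ r ∈ R, ValidList n n r) →
      (encMat n R).length = R.length * (n * (n + 1) - 1 + 1) - 1
  | [] => by simp [encMat]
  | [r] => by
      intro h
      have hr := h r (by simp)
      have he : (enc n r).length = n * (n + 1) - 1 := by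
        rw [enc_length r (fun i hi => (hr.2 i hi).2), hr.1]
      show (enc n r).length = ([r] : List (List ℕ)).length * (n * (n + 1) - 1 + 1) - 1
      rw [he, show ([r] : List (List ℕ)).length = 1 from rfl]
      omega
  | r :: s :: rest => by
      intro h
      have ih := encMat_len (s :: rest) (fun a ha => h a (List.mem_cons_of_mem _ ha))
      have hr := h r (by simp)
      have he : (enc n r).length = n * (n + 1) - 1 := by
        rw [enc_length r (fun i hi => (hr.2 i hi).2), hr.1]
      show (enc n r ++ Sym3.hash :: encMat n (s :: rest)).length = _
      rw [List.length_append, he, List.length_cons, ih]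
      have hc : (r :: s :: rest).length = (s :: rest).length + 1 := by simp
      rw [hc]
      set e := n * (n + 1) - 1 with hedef
      set L := (s :: rest).length with hLdef
      have hL : 1 ≤ L := by simp [hLdef]
      have h1 : (L + 1) * (e + 1) = L * (e + 1) + (e + 1) := by ring
      rw [h1]
      set P := L * (e + 1) with hPdef
      have hP : 1 ≤ P := by
        calc 1 = 1 * 1 := by ring
        _ ≤ L * (e + 1) := Nat.mul_le_mul hL (by omega)
      omega

lemma encMat_inj {n : ℕ} :
    ∀ R W : List (List ℕ), (∀ r ∈ R, ValidList n n r) → (∀ r ∈ W, ValidList n n r) →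
      R.length = W.length → encMat n R = encMat n W → R = W
  | [], [], _, _, _, _ => rfl
  | [], _ :: _, _, _, hl, _ => by
      simp only [List.length_cons, List.length_nil] at hl
      omega
  | _ :: _, [], _, _, hl, _ => by
      simp only [List.length_cons, List.length_nil] at hl
      omega
  | [r], [w], hR, hW, _, h => by
      have := enc_inj r w (hR r (by simp)).2 (hW w (by simp)).2 h
      rw [this]
  | [r], w :: w' :: W', _, _, hl, _ => by
      simp only [List.length_cons, List.length_nil] at hl
      omega
  | r :: r' :: R', [w], _, _, hl, _ => by
      simp only [List.length_cons, List.length_nil] at hl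
      omega
  | r :: r' :: R', w :: w' :: W', hR, hW, hl, h => by
      rw [show encMat n (r :: r' :: R') = enc n r ++ Sym3.hash :: encMat n (r' :: R') from rfl,
        show encMat n (w :: w' :: W') = enc n w ++ Sym3.hash :: encMat n (w' :: W') from rfl] at h
      have hrlen : (enc n r).length = (enc n w).length := by
        have h1 := hR r (by simp); have h2 := hW w (by simp)
        rw [enc_length r (fun i hi => (h1.2 i hi).2),
          enc_length w (fun i hi => (h2.2 i hi).2), h1.1, h2.1]
      obtain ⟨h1, h2⟩ := List.append_inj h hrlen
      have h3 : encMat n (r' :: R') = encMat n (w' :: W') := by simpa using h2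
      have ihr := enc_inj r w (hR r (by simp)).2 (hW w (by simp)).2 h1
      have ih := encMat_inj (r' :: R') (w' :: W')
        (fun a ha => hR a (List.mem_cons_of_mem _ ha))
        (fun a ha => hW a (List.mem_cons_of_mem _ ha))
        (by simpa using hl) h3
      rw [ihr, ih]

/-- `SelSum R s` holds iff `s` is obtained by choosing one entry from each row of `R`
(the value `sum_D(σ)` for some choice function `σ`). -/
inductive SelSum : List (List ℕ) → ℕ → Prop
  | nil : SelSum [] 0
  | cons {a : ℕ} {r : List ℕ} {rest : List (List ℕ)} {s : ℕ} :
      a ∈ r → SelSum rest s → SelSum (r :: rest) (a + s)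

def L2pos (n : ℕ) : Set (List Sym3) :=
  {x | ∃ R R' : List (List ℕ), ValidMat n R ∧ ValidMat n R' ∧
        (∃ s : ℕ, SelSum R s ∧ SelSum R' s) ∧
        x = encMat n R ++ Sym3.hash :: Sym3.hash :: encMat n R'}

def L2neg (n : ℕ) : Set (List Sym3) :=
  {x | ∃ R R' : List (List ℕ), ValidMat n R ∧ ValidMat n R' ∧
        (∀ s s' : ℕ, SelSum R s → SelSum R' s' → s ≠ s') ∧
        x = encMat n R ++ Sym3.hash :: Sym3.hash :: encMat n R'}

lemma L2_disj (n : ℕ) : Disjoint (L2pos n) (L2neg n) := by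
  rw [Set.disjoint_left]
  rintro x ⟨R, R', hR, hR', ⟨s, hs, hs'⟩, rfl⟩ ⟨W, W', hW, hW', hne, heq⟩
  have hlen : (encMat n R).length = (encMat n W).length := by
    rw [encMat_len R hR.2, encMat_len W hW.2, hR.1, hW.1]
  obtain ⟨h1, h2⟩ := List.append_inj heq hlen
  have h2' : encMat n R' = encMat n W' := by simpa using h2
  have e1 : R = W := encMat_inj R W hR.2 hW.2 (by rw [hR.1, hW.1]) h1
  have e2 : R' = W' := encMat_inj R' W' hR'.2 hW'.2 (by rw [hR'.1, hW'.1]) h2'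
  exact hne s s (e1 ▸ hs) (e2 ▸ hs') rfl

def L2prob : PromiseFamily Sym3 := ⟨L2pos, L2neg, L2_disj⟩

def L2fam : Family := { alph := Sym3, prob := L2prob }
/-! ## One-way probabilistic finite automata data -/

/-- Product of the matrices of the symbols of a word. -/
noncomputable def wordMatrix {α Q : Type} [Fintype Q] [DecidableEq Q]
    (Mσ : TapeSym α → Matrix Q Q ℝ) (w : List (TapeSym α)) : Matrix Q Q ℝ :=
  (w.map Mσ).prod

/-- The tape word `▷ x ◁`. -/
def tapeWord {α : Type} (x : List α) : List (TapeSym α) :=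
  Sum.inr false :: (x.map Sum.inl ++ [Sum.inr true])

/-- `p_{acc}(x : q)`: the `q`-entry of the row vector `ν · M_{▷x◁}`. -/
noncomputable def pacc {α Q : Type} [Fintype Q] [DecidableEq Q]
    (ν : Q → ℝ) (Mσ : TapeSym α → Matrix Q Q ℝ) (x : List α) (q : Q) : ℝ :=
  Matrix.vecMul ν (wordMatrix Mσ (tapeWord x)) q

/-! The vectors `ν M_{▷x}` for `x ∈ A` live in `ℝ^{Q_n}`, so some `≤ |Q_n|` of them, coming from
words `S ⊆ A`, span all the others. They are probability vectors, hence every `ν M_{▷x}` is an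
*affine* combination of those from `S`. Since `p_acc(xy : q) = (ν M_{▷x} · M_{y◁})_q` is linear in
`ν M_{▷x}`, the value `f` taken on all of `S` is then taken on every `x`. -/

open Matrix

theorem exists_finset_subset_card_le_finrank_image_subset_span (K : Type*) {V ι : Type*}
    [DivisionRing K] [AddCommGroup V] [Module K V] [FiniteDimensional K V]
    (v : ι → V) (A : Set ι) :
    ∃ S : Finset ι, ↑S ⊆ A ∧ S.card ≤ Module.finrank K V ∧
      v '' A ⊆ Submodule.span K (v '' S) := by
  obtain ⟨b, hbA, -, hspan, hli⟩ :=
    exists_linearIndepOn_extension (linearIndepOn_empty K v) (Set.empty_subset A)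
  have : Finite b := hli.finite
  lift b to Finset ι using Set.toFinite b
  exact ⟨b, hbA, by simpa using hli.fintype_card_le_finrank, hspan⟩

theorem LinearMap.eq_of_mem_span_of_forall_eq {K V : Type*} [CommSemiring K] [AddCommMonoid V]
    [Module K V] (φ σ : V →ₗ[K] K) {T : Set V} {c : K} (hφ : ∀ t ∈ T, φ t = c)
    (hσ : ∀ t ∈ T, σ t = 1) {u : V} (hu : u ∈ Submodule.span K T) (hσu : σ u = 1) :
    φ u = c := by
  have := LinearMap.eqOn_span (f := φ) (g := c • σ) (fun t ht => by simp [hφ t ht, hσ t ht]) hu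
  simpa [hσu] using this

section
variable {α Q : Type} [Fintype Q] [DecidableEq Q]

noncomputable def prefixVec (ν : Q → ℝ) (Mσ : TapeSym α → Matrix Q Q ℝ) (x : List α) : Q → ℝ :=
  ν ᵥ* wordMatrix Mσ (Sum.inr false :: x.map Sum.inl)

noncomputable def suffixMatrix (Mσ : TapeSym α → Matrix Q Q ℝ) (y : List α) : Matrix Q Q ℝ :=
  wordMatrix Mσ (y.map Sum.inl ++ [Sum.inr true])

theorem wordMatrix_append (Mσ : TapeSym α → Matrix Q Q ℝ) (v w : List (TapeSym α)) :
    wordMatrix Mσ (v ++ w) = wordMatrix Mσ v * wordMatrix Mσ w := by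
  simp [wordMatrix]

theorem pacc_append (ν : Q → ℝ) (Mσ : TapeSym α → Matrix Q Q ℝ) (x y : List α) (q : Q) :
    pacc ν Mσ (x ++ y) q = (prefixVec ν Mσ x ᵥ* suffixMatrix Mσ y) q := by
  have hsplit : tapeWord (x ++ y) = ((Sum.inr false :: x.map Sum.inl : List (TapeSym α)) ++
      (y.map Sum.inl ++ [Sum.inr true] : List (TapeSym α))) := by
    rw [tapeWord, List.map_append]
    exact congrArg (List.cons _) (List.append_assoc _ _ _)
  rw [pacc, hsplit, wordMatrix_append, ← vecMul_vecMul, prefixVec, suffixMatrix]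

theorem wordMatrix_mulVec_one {Mσ : TapeSym α → Matrix Q Q ℝ} (hM : ∀ σ i, ∑ j, Mσ σ i j = 1)
    (w : List (TapeSym α)) : wordMatrix Mσ w *ᵥ 1 = 1 := by
  induction w with
  | nil => simp [wordMatrix]
  | cons σ w ih =>
    have hσ : Mσ σ *ᵥ 1 = 1 := funext fun i => by simpa [mulVec, dotProduct] using hM σ i
    simp only [wordMatrix, List.map_cons, List.prod_cons] at ih ⊢
    rw [← mulVec_mulVec, ih, hσ]

theorem sum_prefixVec {ν : Q → ℝ} {Mσ : TapeSym α → Matrix Q Q ℝ} (hν : ∑ q, ν q = 1)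
    (hM : ∀ σ i, ∑ j, Mσ σ i j = 1) (x : List α) : ∑ j, prefixVec ν Mσ x j = 1 := by
  rw [← dotProduct_one, prefixVec, ← dotProduct_mulVec, wordMatrix_mulVec_one hM, dotProduct_one,
    hν]

end

theorem key_lemma_1pfa_general {α : Type}
    (Q : ℕ → Type) [∀ n, Fintype (Q n)] [∀ n, DecidableEq (Q n)]
    (p' : Polynomial ℕ) (hQ : ∀ n, Fintype.card (Q n) ≤ p'.eval n)
    (ν : (n : ℕ) → Q n → ℝ)
    (hν1 : ∀ n, ∑ q, ν n q = 1)
    (Mσ : (n : ℕ) → TapeSym α → Matrix (Q n) (Q n) ℝ)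
    (hM1 : ∀ n σ i, ∑ j, Mσ n σ i j = 1)
    (Qacc : (n : ℕ) → Set (Q n)) (D : ℕ → Set (List α))
    (f : (n m l : ℕ) → Q n → ℝ) :
    ∃ p : Polynomial ℕ, ∀ n m l : ℕ, 0 < n → 0 < l → l < m → ∀ q ∈ Qacc n,
      ∃ S : Finset (List α),
        (↑S ⊆ {x : List α | x.length = m - l ∧ ∃ z : List α, z.length = l ∧
            x ++ z ∈ D n ∧ pacc (ν n) (Mσ n) (x ++ z) q = f n m l q}) ∧
        S.card ≤ p.eval n ∧
        ∀ y : List α, y.length = l →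
          (∀ w ∈ S, w ++ y ∈ D n ∧ pacc (ν n) (Mσ n) (w ++ y) q = f n m l q) →
          ∀ x : List α, (x.length = m - l ∧ ∃ z : List α, z.length = l ∧
              x ++ z ∈ D n ∧ pacc (ν n) (Mσ n) (x ++ z) q = f n m l q) →
            x ++ y ∈ D n → pacc (ν n) (Mσ n) (x ++ y) q = f n m l q := by
  refine ⟨p', fun n m l _ _ _ q _ => ?_⟩
  obtain ⟨S, hSA, hScard, hspan⟩ :=
    exists_finset_subset_card_le_finrank_image_subset_span ℝ (prefixVec (ν n) (Mσ n))
      {x : List α | x.length = m - l ∧ ∃ z : List α, z.length = l ∧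
        x ++ z ∈ D n ∧ pacc (ν n) (Mσ n) (x ++ z) q = f n m l q}
  refine ⟨S, hSA, ?_, fun y _ hSy x hxA _ => ?_⟩
  · calc S.card ≤ Module.finrank ℝ (Q n → ℝ) := hScard
      _ = Fintype.card (Q n) := Module.finrank_fintype_fun_eq_card ℝ
      _ ≤ p'.eval n := hQ n
  rw [pacc_append]
  refine LinearMap.eq_of_mem_span_of_forall_eq
    ((LinearMap.proj q).comp (suffixMatrix (Mσ n) y).vecMulLinear) (dotProductEquiv ℝ (Q n) 1)
    ?_ ?_ (hspan ⟨x, hxA, rfl⟩) ((one_dotProduct _).trans (sum_prefixVec (hν1 n) (hM1 n) x))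
  · rintro _ ⟨w, hw, rfl⟩
    simpa [pacc_append] using (hSy w hw).2
  · rintro _ ⟨w, -, rfl⟩
    exact (one_dotProduct _).trans (sum_prefixVec (hν1 n) (hM1 n) w)

/-- key lemma on polynomial-size families of 1pfa's. -/
theorem key_lemma_1pfa {α : Type} [Fintype α]
    (Q : ℕ → Type) [∀ n, Fintype (Q n)] [∀ n, DecidableEq (Q n)]
    (p' : Polynomial ℕ) (hQ : ∀ n, Fintype.card (Q n) ≤ p'.eval n)
    (ν : (n : ℕ) → Q n → ℝ)
    (hν0 : ∀ n q, 0 ≤ ν n q) (hν1 : ∀ n, ∑ q, ν n q = 1)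
    (Mσ : (n : ℕ) → TapeSym α → Matrix (Q n) (Q n) ℝ)
    (hM0 : ∀ n σ i j, 0 ≤ Mσ n σ i j) (hM1 : ∀ n σ i, ∑ j, Mσ n σ i j = 1)
    (Qacc : (n : ℕ) → Set (Q n)) (D : ℕ → Set (List α))
    (f : (n m l : ℕ) → Q n → ℝ) :
    ∃ p : Polynomial ℕ, ∀ n m l : ℕ, 0 < n → 0 < l → l < m → ∀ q ∈ Qacc n,
      ∃ S : Finset (List α),
        (↑S ⊆ {x : List α | x.length = m - l ∧ ∃ z : List α, z.length = l ∧
            x ++ z ∈ D n ∧ pacc (ν n) (Mσ n) (x ++ z) q = f n m l q}) ∧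
        S.card ≤ p.eval n ∧
        ∀ y : List α, y.length = l →
          (∀ w ∈ S, w ++ y ∈ D n ∧ pacc (ν n) (Mσ n) (w ++ y) q = f n m l q) →
          ∀ x : List α, (x.length = m - l ∧ ∃ z : List α, z.length = l ∧
              x ++ z ∈ D n ∧ pacc (ν n) (Mσ n) (x ++ z) q = f n m l q) →
            x ++ y ∈ D n → pacc (ν n) (Mσ n) (x ++ y) q = f n m l q :=
  key_lemma_1pfa_general Q p' hQ ν hν1 Mσ hM1 Qacc D f
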